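/- (Refined Kauffman–Murasugi–Thistlethwaite inequality, abstract form.) Let f be a loop-count function on states of n crossings and let ⟨f⟩ := Σ_s w(s) be the sum of the weights over all states s : Fin n → Bool. Then span ⟨f⟩ ≤ 2n + 2(f(s_A) + f(s_B)) − 4. (In diagram language, with c(D) = n and Euler characteristic χ(D) = f(s_A) + f(s_B) − n of the Turaev surface, this reads span⟨D⟩ ≤ 4c(D) + 2(χ(D) − 2).) -/

import Mathlib

open LaurentPolynomial

/-- Maximal degree (max of the support), with convention `odeg 0 = 0`. -/
noncomputable def odeg (g : LaurentPolynomial ℤ) : ℤ := WithBot.unbotD 0 g.coeff.support.max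

/-- Minimal degree (min of the support), with convention `udeg 0 = 0`. -/
noncomputable def udeg (g : LaurentPolynomial ℤ) : ℤ := WithTop.untopD 0 g.coeff.support.min

/-- The span of a Laurent polynomial. -/
noncomputable def lspan (g : LaurentPolynomial ℤ) : ℤ := odeg g - udeg g

/-- Number of crossings spliced by an A-splice in the state `s`. -/
def alpha {n : ℕ} (s : Fin n → Bool) : ℕ :=
  (Finset.univ.filter (fun i => s i = false)).card

/-- Number of crossings spliced by a B-splice in the state `s`. -/
def beta {n : ℕ} (s : Fin n → Bool) : ℕ :=
  (Finset.univ.filter (fun i => s i = true)).card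

/-- A loop-count function: at least one loop in every state, and changing the
splice at one crossing changes the number of loops by at most one. -/
def IsLoopCount {n : ℕ} (f : (Fin n → Bool) → ℕ) : Prop :=
  (∀ s, 1 ≤ f s) ∧
    ∀ (s : Fin n → Bool) (i : Fin n),
      |(f (Function.update s i (!(s i))) : ℤ) - (f s : ℤ)| ≤ 1

/-- The weight `A^(α(s)-β(s)) * (-A^2 - A^(-2))^(f(s)-1)` of a state `s`. -/
noncomputable def weight {n : ℕ} (f : (Fin n → Bool) → ℕ) (s : Fin n → Bool) :
    LaurentPolynomial ℤ :=
  T ((alpha s : ℤ) - (beta s : ℤ)) * (-T 2 - T (-2)) ^ (f s - 1)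

/-- The Kauffman bracket of a loop-count function: the sum of the weights. -/
noncomputable def bracket {n : ℕ} (f : (Fin n → Bool) → ℕ) : LaurentPolynomial ℤ :=
  ∑ s : Fin n → Bool, weight f s

/-!
The weight of a state `s` is supported in `[α - β - 2 (f s - 1), α - β + 2 (f s - 1)]`. Since
one flip changes the loop count by at most one, `f` is 1-Lipschitz for the Hamming distance,
so `f s ≤ f s_A + β s` and `f s ≤ f s_B + α s`; together with `α + β = n` this confines every
weight, hence the bracket, to `[2 - n - 2 f s_B, n + 2 f s_A - 2]`.
-/

open Finset

lemma lspan_le_of_support_subset_Icc {g : LaurentPolynomial ℤ} {a b : ℤ} (hab : a ≤ b)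
    (hg : g.coeff.support ⊆ Icc a b) : lspan g ≤ b - a := by
  rcases g.coeff.support.eq_empty_or_nonempty with hempty | hne
  · simp [lspan, odeg, udeg, hempty, hab]
  · have hmax : odeg g = g.coeff.support.max' hne := by
      rw [odeg, ← coe_max' hne]; rfl
    have hmin : udeg g = g.coeff.support.min' hne := by
      rw [udeg, ← coe_min' hne]; rfl
    have hle_b := (mem_Icc.mp (hg (max'_mem _ hne))).2
    have hge_a := (mem_Icc.mp (hg (min'_mem _ hne))).1
    rw [lspan, hmax, hmin]
    omega

section SupportInInterval

variable {R : Type*} [Semiring R]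

lemma support_coeff_T_subset (m : ℤ) : (T m : R[T;T⁻¹]).coeff.support ⊆ Icc m m := by
  rw [T, AddMonoidAlgebra.coeff_single, Icc_self]
  exact Finsupp.support_single_subset

lemma support_coeff_mul_subset_Icc {p q : R[T;T⁻¹]} {a b c d : ℤ}
    (hp : p.coeff.support ⊆ Icc a b) (hq : q.coeff.support ⊆ Icc c d) :
    (p * q).coeff.support ⊆ Icc (a + c) (b + d) :=
  (AddMonoidAlgebra.support_coeff_mul_subset p q).trans
    ((add_subset_add hp hq).trans (Icc_add_Icc_subset a b c d))

lemma support_coeff_pow_subset_Icc {p : R[T;T⁻¹]} {a b : ℤ}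
    (hp : p.coeff.support ⊆ Icc a b) (k : ℕ) :
    (p ^ k).coeff.support ⊆ Icc (k * a) (k * b) := by
  induction k with
  | zero => simpa [← T_zero] using support_coeff_T_subset (R := R) 0
  | succ k ih =>
    rw [pow_succ]
    convert support_coeff_mul_subset_Icc ih hp using 2 <;> push_cast <;> ring

lemma support_coeff_neg_T_two_sub_T_neg_two_subset {R : Type*} [Ring R] :
    (-T 2 - T (-2) : R[T;T⁻¹]).coeff.support ⊆ Icc (-2) 2 := by
  rw [AddMonoidAlgebra.coeff_sub, AddMonoidAlgebra.coeff_neg]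
  refine Finsupp.support_sub.trans (union_subset ?_ ?_)
  · rw [Finsupp.support_neg]
    exact (support_coeff_T_subset 2).trans (Icc_subset_Icc (by norm_num) le_rfl)
  · exact (support_coeff_T_subset (-2)).trans (Icc_subset_Icc le_rfl (by norm_num))

end SupportInInterval

section Hamming

variable {ι : Type*} [Fintype ι] [DecidableEq ι]

lemma hammingDist_update_add_one {β : ι → Type*} [∀ i, DecidableEq (β i)] {s t : ∀ i, β i}
    {i : ι} (hi : s i ≠ t i) :
    hammingDist (Function.update s i (t i)) t + 1 = hammingDist s t := by
  have hfilter : ({j | Function.update s i (t i) j ≠ t j} : Finset ι) =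
      ({j | s j ≠ t j} : Finset ι).erase i := by
    ext j
    by_cases hj : j = i <;> simp [hj, Function.update]
  rw [hammingDist, hfilter, card_erase_add_one (by simpa using hi), hammingDist]

lemma sub_le_hammingDist_of_abs_flip_le {g : (ι → Bool) → ℤ}
    (hg : ∀ s i, |g (Function.update s i (!s i)) - g s| ≤ 1) (s t : ι → Bool) :
    g s - g t ≤ hammingDist s t := by
  induction hd : hammingDist s t generalizing s with
  | zero => simp [hammingDist_eq_zero.mp hd]
  | succ k ih =>
    obtain ⟨i, hi⟩ : ∃ i, s i ≠ t i := Function.ne_iff.mp (hammingDist_ne_zero.mp (by omega))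
    have hflip : (!s i) = t i := by revert hi; cases s i <;> cases t i <;> simp
    have hstep := ih (Function.update s i (!s i))
      (by have := hammingDist_update_add_one hi; rw [hflip]; omega)
    have := (abs_le.mp (hg s i)).1
    push_cast
    linarith

end Hamming

section States

variable {n : ℕ}

lemma alpha_eq_hammingDist (s : Fin n → Bool) : alpha s = hammingDist s (fun _ => true) := by
  simp [alpha, hammingDist]

lemma beta_eq_hammingDist (s : Fin n → Bool) : beta s = hammingDist s (fun _ => false) := by
  simp [beta, hammingDist]

lemma alpha_add_beta (s : Fin n → Bool) : alpha s + beta s = n := by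
  simpa [alpha, beta] using
    card_filter_add_card_filter_not (s := (univ : Finset (Fin n))) (fun i => s i = false)

variable {f : (Fin n → Bool) → ℕ}

lemma IsLoopCount.le_add_hammingDist (hf : IsLoopCount f) (s t : Fin n → Bool) :
    (f s : ℤ) ≤ f t + hammingDist s t := by
  have := sub_le_hammingDist_of_abs_flip_le (g := fun s => (f s : ℤ)) hf.2 s t
  linarith

lemma IsLoopCount.le_add_beta (hf : IsLoopCount f) (s : Fin n → Bool) :
    (f s : ℤ) ≤ f (fun _ => false) + beta s := by
  simpa [beta_eq_hammingDist] using hf.le_add_hammingDist s _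

lemma IsLoopCount.le_add_alpha (hf : IsLoopCount f) (s : Fin n → Bool) :
    (f s : ℤ) ≤ f (fun _ => true) + alpha s := by
  simpa [alpha_eq_hammingDist] using hf.le_add_hammingDist s _

lemma support_coeff_weight_subset (hf : IsLoopCount f) (s : Fin n → Bool) :
    (weight f s).coeff.support ⊆
      Icc (2 - n - 2 * f (fun _ => true)) (n + 2 * f (fun _ => false) - 2) := by
  have hA := hf.le_add_beta s
  have hB := hf.le_add_alpha s
  have hab := alpha_add_beta s
  refine (support_coeff_mul_subset_Icc (support_coeff_T_subset _)
    (support_coeff_pow_subset_Icc support_coeff_neg_T_two_sub_T_neg_two_subset _)).trans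
    (Icc_subset_Icc ?_ ?_) <;> push_cast [hf.1 s] <;> omega

lemma support_coeff_bracket_subset (hf : IsLoopCount f) :
    (bracket f).coeff.support ⊆
      Icc (2 - n - 2 * f (fun _ => true)) (n + 2 * f (fun _ => false) - 2) := by
  rw [bracket, AddMonoidAlgebra.coeff_sum]
  exact Finsupp.support_finsetSum.trans
    (biUnion_subset.mpr fun s _ => support_coeff_weight_subset hf s)

end States

/-- Refined Kauffman–Murasugi–Thistlethwaite inequality, abstract form:
`span ⟨f⟩ ≤ 2n + 2(f(s_A) + f(s_B)) - 4`. -/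
theorem lspan_bracket_le {n : ℕ} (f : (Fin n → Bool) → ℕ)
    (hf : IsLoopCount f) :
    lspan (bracket f) ≤
      2 * (n : ℤ) + 2 * ((f (fun _ => false) : ℤ) + (f (fun _ => true) : ℤ)) - 4 := by
  have hA := hf.1 (fun _ => false)
  have hB := hf.1 (fun _ => true)
  have := lspan_le_of_support_subset_Icc (by omega) (support_coeff_bracket_subset hf)
  linarith
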